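/- Every G-invariant polynomial on ℝ² × ℝ² for the diagonal rotation action of S¹ = SO(2) is a polynomial in P₁₁ = X₁²+Y₁², P₂₂ = X₂²+Y₂², P₁₂ = X₁X₂+Y₁Y₂, and Q₁₂ = X₁Y₂−X₂Y₁. -/

import Mathlib

open MvPolynomial

/-!
In the complex coordinates `zₖ = xₖ + i yₖ`, `wₖ = xₖ - i yₖ` the rotation by `α` becomes
diagonal, `zₖ ↦ e^{iα} zₖ`, `wₖ ↦ e^{-iα} wₖ`, so it multiplies a monomial by `e^{iαk}` where `k`
is its number of `z`'s minus its number of `w`'s. An invariant polynomial therefore only contains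
monomials with `k = 0`, and these are products of the `zᵢ wⱼ`. Back in real coordinates each `zᵢ wⱼ`
is a complex combination of `P₁₁, P₂₂, P₁₂, Q₁₂`, and taking real parts of the coefficients gives
a real polynomial in them.
-/

/-- The diagonal rotation of a point of ℝ²×ℝ² ≅ ℝ⁴ (variables `X₁, Y₁, X₂, Y₂`). -/
noncomputable def rotPt (α : ℝ) (v : Fin 4 → ℝ) : Fin 4 → ℝ :=
  ![v 0 * Real.cos α - v 1 * Real.sin α,
    v 0 * Real.sin α + v 1 * Real.cos α,
    v 2 * Real.cos α - v 3 * Real.sin α,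
    v 2 * Real.sin α + v 3 * Real.cos α]

/-- The Hilbert basis `P₁₁ = X₁²+Y₁²`, `P₂₂ = X₂²+Y₂²`, `P₁₂ = X₁X₂+Y₁Y₂`,
`Q₁₂ = X₁Y₂−X₂Y₁`. -/
noncomputable def hilbertGens : Fin 4 → MvPolynomial (Fin 4) ℝ :=
  ![X 0 ^ 2 + X 1 ^ 2,
    X 2 ^ 2 + X 3 ^ 2,
    X 0 * X 2 + X 1 * X 3,
    X 0 * X 3 - X 2 * X 1]

open Complex

theorem Multiset.prod_mul_prod_mem {M S : Type*} [CommMonoid M] [SetLike S M]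
    [SubmonoidClass S M] {A : S} {s t : Multiset M} (hst : Multiset.card s = Multiset.card t)
    (h : ∀ a ∈ s, ∀ b ∈ t, a * b ∈ A) : s.prod * t.prod ∈ A := by
  classical
  induction s using Multiset.induction_on generalizing t with
  | empty =>
    rw [Multiset.card_zero, eq_comm, Multiset.card_eq_zero] at hst
    simp [hst, one_mem]
  | cons a s ih =>
    obtain ⟨b, hb⟩ : ∃ b, b ∈ t := Multiset.card_pos_iff_exists_mem.mp (by simp [← hst])
    rw [← Multiset.cons_erase hb] at hst h ⊢
    simp only [Multiset.prod_cons, Multiset.card_cons, add_left_inj, Multiset.mem_cons] at hst h ⊢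
    rw [mul_mul_mul_comm]
    exact mul_mem (h a (.inl rfl) b (.inl rfl))
      (ih hst fun a' ha' b' hb' => h a' (.inr ha') b' (.inr hb'))

namespace MvPolynomial

section

variable {R σ τ : Type*} [CommSemiring R]

theorem eval_aeval (v : τ → R) (f : σ → MvPolynomial τ R) (p : MvPolynomial σ R) :
    eval v (aeval f p) = eval (fun i => eval v (f i)) p := by
  rw [aeval_eq_bind₁]
  exact eval₂Hom_bind₁ _ _ _ _

theorem aeval_C_mul_X_monomial (u : σ → R) (e : σ →₀ ℕ) (a : R) :
    aeval (fun j => C (u j) * X j) (monomial e a) =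
      monomial e (a * e.prod fun j k => u j ^ k) := by
  simp only [aeval_monomial, mul_pow, Finsupp.prod_mul, ← map_pow, ← map_finsuppProd,
    algebraMap_eq]
  rw [monomial_eq, C_mul, mul_assoc]

theorem coeff_aeval_C_mul_X (u : σ → R) (q : MvPolynomial σ R) (d : σ →₀ ℕ) :
    coeff d (aeval (fun j => C (u j) * X j) q) = (d.prod fun j k => u j ^ k) * coeff d q := by
  classical
  induction q using MvPolynomial.induction_on' with
  | monomial e a =>
    rw [aeval_C_mul_X_monomial, coeff_monomial, coeff_monomial]
    split_ifs with h <;> simp [h, mul_comm]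
  | add p q hp hq => simp only [map_add, coeff_add, hp, hq, mul_add]

end

theorem exists_aeval_eq_of_map_eq_aeval_map {σ ι : Type*} {p : MvPolynomial σ ℝ}
    {g : ι → MvPolynomial σ ℝ} {r : MvPolynomial ι ℂ}
    (h : map (algebraMap ℝ ℂ) p = aeval (fun i => map (algebraMap ℝ ℂ) (g i)) r) :
    ∃ q : MvPolynomial ι ℝ, p = aeval g q := by
  set a : MvPolynomial ι ℝ := AddMonoidAlgebra.map reAddGroupHom r
  set b : MvPolynomial ι ℝ := AddMonoidAlgebra.map imAddGroupHom r
  have hr : r = map (algebraMap ℝ ℂ) a + I • map (algebraMap ℝ ℂ) b := by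
    ext d
    rw [coeff_add, coeff_smul, coeff_map, coeff_map, coeff_addMonoidAlgebraMap,
      coeff_addMonoidAlgebraMap, coe_algebraMap, smul_eq_mul, mul_comm]
    exact (re_add_im _).symm
  rw [hr, map_add, map_smul, aeval_eq_bind₁, ← map_bind₁, ← map_bind₁] at h
  refine ⟨a, MvPolynomial.ext _ _ fun d => ?_⟩
  have hd := congrArg (fun f => (coeff d f).re) h
  rw [coeff_add, coeff_smul, coeff_map, coeff_map, coeff_map] at hd
  simpa [aeval_eq_bind₁] using hd

end MvPolynomial

noncomputable def circleScale {σ : Type*} (w : σ → ℤ) (α : ℝ) : σ → MvPolynomial σ ℂ :=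
  fun j => C (exp (α * w j * I)) * X j

theorem coeff_aeval_circleScale {σ : Type*} (w : σ → ℤ) (α : ℝ) (q : MvPolynomial σ ℂ)
    (d : σ →₀ ℕ) :
    coeff d (aeval (circleScale w α) q) = exp (α * Finsupp.weight w d * I) * coeff d q := by
  unfold circleScale
  rw [coeff_aeval_C_mul_X]
  congr 1
  simp only [Finsupp.prod, ← exp_nat_mul, ← exp_sum, Finsupp.weight_apply, Finsupp.sum,
    Int.cast_sum, Finset.mul_sum, Finset.sum_mul]
  exact congrArg exp (Finset.sum_congr rfl fun j _ => by
    rw [nsmul_eq_mul, Int.cast_mul, Int.cast_natCast]; ring)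

theorem exists_exp_mul_I_ne_one {k : ℤ} (hk : k ≠ 0) : ∃ α : ℝ, exp (α * k * I) ≠ 1 := by
  refine ⟨Real.pi / k, ?_⟩
  have : ((Real.pi / k : ℝ) : ℂ) * k = Real.pi := by push_cast; field_simp
  rw [this, exp_pi_mul_I]
  norm_num

theorem weight_eq_zero_of_aeval_circleScale_eq {σ : Type*} (w : σ → ℤ) {q : MvPolynomial σ ℂ}
    (hq : ∀ α, aeval (circleScale w α) q = q) {d : σ →₀ ℕ} (hd : d ∈ q.support) :
    Finsupp.weight w d = 0 := by
  by_contra hne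
  obtain ⟨α, hα⟩ := exists_exp_mul_I_ne_one hne
  have hcoeff := congrArg (coeff d) (hq α)
  rw [coeff_aeval_circleScale] at hcoeff
  exact hα (mul_right_cancel₀ (mem_support_iff.mp hd) (hcoeff.trans (one_mul _).symm))

noncomputable def rotSubst (α : ℝ) : Fin 4 → MvPolynomial (Fin 4) ℝ :=
  ![C (Real.cos α) * X 0 - C (Real.sin α) * X 1,
    C (Real.sin α) * X 0 + C (Real.cos α) * X 1,
    C (Real.cos α) * X 2 - C (Real.sin α) * X 3,
    C (Real.sin α) * X 2 + C (Real.cos α) * X 3]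

theorem aeval_rotSubst_eq_self {p : MvPolynomial (Fin 4) ℝ}
    (hinv : ∀ (α : ℝ) (v : Fin 4 → ℝ), eval (rotPt α v) p = eval v p) (α : ℝ) :
    aeval (rotSubst α) p = p := by
  refine MvPolynomial.funext fun v => ?_
  have hrot : (fun i => eval v (rotSubst α i)) = rotPt α v := by
    ext i
    fin_cases i <;> simp [rotSubst, rotPt] <;> ring
  rw [eval_aeval, hrot, hinv]

/-! `ofZW` substitutes `zₖ = xₖ + i yₖ`, `wₖ = xₖ - i yₖ` and `toZW` is its inverse; the complex
variables are ordered `z₁, w₁, z₂, w₂`. -/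

noncomputable def ofZW : Fin 4 → MvPolynomial (Fin 4) ℂ :=
  ![X 0 + C I * X 1, X 0 - C I * X 1, X 2 + C I * X 3, X 2 - C I * X 3]

noncomputable def toZW : Fin 4 → MvPolynomial (Fin 4) ℂ :=
  ![C (1 / 2) * (X 0 + X 1), C (-I / 2) * (X 0 - X 1),
    C (1 / 2) * (X 2 + X 3), C (-I / 2) * (X 2 - X 3)]

def zwWeight : Fin 4 → ℤ := ![1, -1, 1, -1]

noncomputable def zwProducts (R : Type*) [CommSemiring R] : Fin 4 → MvPolynomial (Fin 4) R :=
  ![X 0 * X 1, X 2 * X 3, X 0 * X 3, X 2 * X 1]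

/-- `z₁w₁ = P₁₁`, `z₂w₂ = P₂₂`, `z₁w₂ = P₁₂ - i Q₁₂`, `z₂w₁ = P₁₂ + i Q₁₂`. -/
noncomputable def zwProductsInHilbertBasis : Fin 4 → MvPolynomial (Fin 4) ℂ :=
  ![X 0, X 1, X 2 - C I * X 3, X 2 + C I * X 3]

theorem aeval_toZW_comp_aeval_rotSubst (α : ℝ) :
    (aeval (R := ℝ) toZW).comp (aeval (rotSubst α)) =
      ((aeval (circleScale zwWeight α)).restrictScalars ℝ).comp (aeval toZW) := by
  have hpos : exp (α * I) = cos α + sin α * I := exp_mul_I _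
  have hneg : exp (-(α * I)) = cos α - sin α * I := by
    rw [← neg_mul, exp_mul_I, cos_neg, sin_neg]
    ring
  refine MvPolynomial.algHom_ext fun i => MvPolynomial.funext fun v => ?_
  fin_cases i <;> simp [toZW, rotSubst, circleScale, zwWeight, hpos, hneg, algebraMap_eq] <;>
    ring_nf <;> simp only [I_sq] <;> ring

theorem aeval_ofZW_aeval_toZW (p : MvPolynomial (Fin 4) ℝ) :
    aeval ofZW (aeval (R := ℝ) toZW p) = map (algebraMap ℝ ℂ) p := by
  have hcomp : ((aeval ofZW).restrictScalars ℝ).comp (aeval (R := ℝ) toZW) =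
      mapAlgHom (Algebra.ofId ℝ ℂ) := by
    refine MvPolynomial.algHom_ext fun i => MvPolynomial.funext fun v => ?_
    fin_cases i <;> simp [ofZW, toZW] <;> ring_nf <;> simp only [I_sq] <;> ring
  exact DFunLike.congr_fun hcomp p

theorem aeval_ofZW_aeval_zwProducts (r : MvPolynomial (Fin 4) ℂ) :
    aeval ofZW (aeval (zwProducts ℂ) r) =
      aeval (fun i => map (algebraMap ℝ ℂ) (hilbertGens i))
        (aeval zwProductsInHilbertBasis r) := by
  have hcomp : (aeval ofZW).comp (aeval (zwProducts ℂ)) =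
      (aeval fun i => map (algebraMap ℝ ℂ) (hilbertGens i)).comp
        (aeval zwProductsInHilbertBasis) := by
    refine MvPolynomial.algHom_ext fun j => MvPolynomial.funext fun v => ?_
    fin_cases j <;> simp [ofZW, zwProducts, zwProductsInHilbertBasis, hilbertGens] <;>
      ring_nf <;> simp only [I_sq] <;> ring
  exact DFunLike.congr_fun hcomp r

theorem monomial_mem_adjoin_zwProducts {R : Type*} [CommSemiring R] {d : Fin 4 →₀ ℕ}
    (hd : d 0 + d 2 = d 1 + d 3) :
    monomial d (1 : R) ∈ Algebra.adjoin R (Set.range (zwProducts R)) := by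
  set s : Multiset (MvPolynomial (Fin 4) R) := .replicate (d 0) (X 0) + .replicate (d 2) (X 2)
  set t : Multiset (MvPolynomial (Fin 4) R) := .replicate (d 1) (X 1) + .replicate (d 3) (X 3)
  have hst : monomial d (1 : R) = s.prod * t.prod := by
    rw [monomial_eq, C_1, one_mul, Finsupp.prod_fintype _ _ (by simp), Fin.prod_univ_four]
    simp only [s, t, Multiset.prod_add, Multiset.prod_replicate]
    ring
  rw [hst]
  refine Multiset.prod_mul_prod_mem (by simp [s, t, hd]) fun a ha b hb => Algebra.subset_adjoin ?_
  rcases Multiset.mem_add.mp ha with ha | ha <;> rcases Multiset.mem_add.mp hb with hb | hb <;>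
    rw [Multiset.eq_of_mem_replicate ha, Multiset.eq_of_mem_replicate hb]
  exacts [⟨0, by simp [zwProducts]⟩, ⟨2, by simp [zwProducts]⟩, ⟨3, by simp [zwProducts]⟩,
    ⟨1, by simp [zwProducts]⟩]

theorem mem_adjoin_zwProducts_of_weight_eq_zero {R : Type*} [CommSemiring R]
    {q : MvPolynomial (Fin 4) R} (hq : ∀ d ∈ q.support, Finsupp.weight zwWeight d = 0) :
    q ∈ Algebra.adjoin R (Set.range (zwProducts R)) := by
  rw [q.as_sum]
  refine Subalgebra.sum_mem _ fun d hd => ?_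
  have hbal : d 0 + d 2 = d 1 + d 3 := by
    have := hq d hd
    simp [Finsupp.weight_apply, Finsupp.sum_fintype, Fin.sum_univ_four, zwWeight] at this
    omega
  rw [← mul_one (coeff d q), ← C_mul_monomial]
  exact Subalgebra.mul_mem _ (Subalgebra.algebraMap_mem _ _) (monomial_mem_adjoin_zwProducts hbal)

/-- every SO(2)-invariant polynomial on ℝ²×ℝ² (diagonal rotation action) is a
polynomial in `P₁₁`, `P₂₂`, `P₁₂`, `Q₁₂`. -/
theorem invariant_polynomial_is_polynomial_in_hilbert_basis
    (p : MvPolynomial (Fin 4) ℝ)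
    (hinv : ∀ (α : ℝ) (v : Fin 4 → ℝ), eval (rotPt α v) p = eval v p) :
    ∃ q : MvPolynomial (Fin 4) ℝ, p = aeval hilbertGens q := by
  have hscale : ∀ α, aeval (circleScale zwWeight α) (aeval (R := ℝ) toZW p) = aeval toZW p :=
    fun α => by
      have h := DFunLike.congr_fun (aeval_toZW_comp_aeval_rotSubst α) p
      rw [AlgHom.comp_apply, aeval_rotSubst_eq_self hinv] at h
      exact h.symm
  obtain ⟨r, hr⟩ : aeval (R := ℝ) toZW p ∈ (aeval (R := ℂ) (zwProducts ℂ)).range := by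
    rw [← Algebra.adjoin_range_eq_range_aeval]
    exact mem_adjoin_zwProducts_of_weight_eq_zero fun d hd =>
      weight_eq_zero_of_aeval_circleScale_eq zwWeight hscale hd
  refine exists_aeval_eq_of_map_eq_aeval_map (r := aeval zwProductsInHilbertBasis r) ?_
  rw [← aeval_ofZW_aeval_toZW, ← hr]
  exact aeval_ofZW_aeval_zwProducts r
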